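/- Let h ∈ C²((0,+∞)) ∩ C([0,+∞)) be such that h''(r) > 0 for all r > 0 and lim_{r→+∞} h(r)/r^γ = k/(γ−1) for some constants k > 0 and γ > 1. Let 0 < δ ≤ M < +∞. Then there exist R ≥ M + 1 and positive constants C₁, C₂ such that: h(r|r̄) ≥ C₁ |r − r̄|² whenever (r, r̄) ∈ [0,R] × [δ,M], and h(r|r̄) ≥ C₂ |r − r̄|^γ whenever (r, r̄) ∈ (R,+∞) × [δ,M]. -/

import Mathlib

/-!
On a compact range of `r` the bound is quadratic: where `r` stays away from `[δ, M]` the relative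
quantity is a positive continuous function on a compact set, hence bounded below, while near
`[δ, M]` the second derivative is bounded below by some `m > 0`, so `h - m x² / 2` is convex and
its tangent lines give `h(r|r̄) ≥ m (r - r̄)² / 2`. For large `r` the tangent line at `r̄` grows
only linearly, whereas `h` grows like `r^γ` with `γ > 1`.
-/

open Set Filter Topology

/-- The relative quantity `F(r|r̄) := F(r) − F(r̄) − F′(r̄)(r − r̄)`. -/
noncomputable def relQuant (F : ℝ → ℝ) (r rb : ℝ) : ℝ := F r - F rb - deriv F rb * (r - rb)

lemma ConvexOn.relQuant_nonneg {S : Set ℝ} {F : ℝ → ℝ} (hF : ConvexOn ℝ S F) {r rb : ℝ}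
    (hr : r ∈ S) (hrb : rb ∈ S) (hd : DifferentiableAt ℝ F rb) : 0 ≤ relQuant F r rb := by
  unfold relQuant
  rcases lt_trichotomy r rb with hlt | rfl | hgt
  · have := hF.slope_le_deriv hr hrb hlt hd
    rw [slope_def_field, div_le_iff₀ (sub_pos.2 hlt)] at this
    linarith
  · simp
  · have := hF.deriv_le_slope hrb hr hgt hd
    rw [slope_def_field, le_div_iff₀ (sub_pos.2 hgt)] at this
    linarith

lemma StrictConvexOn.relQuant_pos {S : Set ℝ} {F : ℝ → ℝ} (hF : StrictConvexOn ℝ S F)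
    {r rb : ℝ} (hr : r ∈ S) (hrb : rb ∈ S) (hne : r ≠ rb) (hd : DifferentiableAt ℝ F rb) :
    0 < relQuant F r rb := by
  unfold relQuant
  rcases hne.lt_or_gt with hlt | hgt
  · have := hF.slope_lt_deriv hr hrb hlt hd
    rw [slope_def_field, div_lt_iff₀ (sub_pos.2 hlt)] at this
    linarith
  · have := hF.deriv_lt_slope hrb hr hgt hd
    rw [slope_def_field, lt_div_iff₀ (sub_pos.2 hgt)] at this
    linarith

lemma relQuant_sub_mul_sq {F : ℝ → ℝ} {rb : ℝ} (hd : DifferentiableAt ℝ F rb) (c r : ℝ) :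
    relQuant (fun x => F x - c * x ^ 2) r rb = relQuant F r rb - c * (r - rb) ^ 2 := by
  have hderiv : deriv (fun x => F x - c * x ^ 2) rb = deriv F rb - c * (2 * rb) := by
    simpa using (hd.hasDerivAt.fun_sub ((hasDerivAt_pow 2 rb).const_mul c)).deriv
  simp only [relQuant, hderiv]
  ring

lemma ContinuousOn.relQuant {F : ℝ → ℝ} {s t : Set ℝ} (hF : ContinuousOn F s)
    (hF' : ContinuousOn (deriv F) t) (hts : t ⊆ s) :
    ContinuousOn (fun p : ℝ × ℝ => relQuant F p.1 p.2) (s ×ˢ t) :=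
  ((hF.comp continuousOn_fst fun _ hp => hp.1).sub
    (hF.comp continuousOn_snd fun _ hp => hts hp.2)).sub
    ((hF'.comp continuousOn_snd fun _ hp => hp.2).mul (continuousOn_fst.sub continuousOn_snd))

lemma StrictConvexOn.exists_pos_le_relQuant {S K L : Set ℝ} {F : ℝ → ℝ}
    (hF : StrictConvexOn ℝ S F) (hFc : ContinuousOn F S) (hK : IsCompact K) (hL : IsCompact L)
    (hKS : K ⊆ S) (hLS : L ⊆ S) (hKL : Disjoint K L) (hF' : ContinuousOn (deriv F) L)
    (hd : ∀ x ∈ L, DifferentiableAt ℝ F x) :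
    ∃ ε > 0, ∀ r ∈ K, ∀ rb ∈ L, ε ≤ relQuant F r rb := by
  obtain ⟨ε, hε, hεle⟩ := (hK.prod hL).exists_forall_le' ((hFc.relQuant hF' hLS).mono
    (prod_mono hKS subset_rfl)) fun p hp =>
      hF.relQuant_pos (hKS hp.1) (hLS hp.2) (hKL.ne_of_mem hp.1 hp.2) (hd _ hp.2)
  exact ⟨ε, hε, fun r hr rb hrb => hεle (r, rb) ⟨hr, hrb⟩⟩

section SecondDerivative

variable {D : Set ℝ} {F : ℝ → ℝ} {m : ℝ}

lemma convexOn_sub_half_mul_sq (hD : Convex ℝ D) (hF : ContinuousOn F D)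
    (hF' : DifferentiableOn ℝ F (interior D))
    (hF'' : DifferentiableOn ℝ (deriv F) (interior D))
    (hm : ∀ x ∈ interior D, m ≤ deriv (deriv F) x) :
    ConvexOn ℝ D (fun x => F x - m / 2 * x ^ 2) := by
  refine convexOn_of_hasDerivWithinAt2_nonneg (f' := fun x => deriv F x - m * x)
    (f'' := fun x => deriv (deriv F) x - m) hD
    (hF.sub (continuousOn_const.mul (continuousOn_pow 2))) (fun x hx => ?_) (fun x hx => ?_)
    (fun x hx => sub_nonneg.2 (hm x hx))
  · have hx' := (hF'.differentiableAt (isOpen_interior.mem_nhds hx)).hasDerivAt.fun_sub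
      ((hasDerivAt_pow 2 x).const_mul (m / 2))
    exact (hx'.congr_deriv (by norm_num; ring)).hasDerivWithinAt
  · have hx' := (hF''.differentiableAt (isOpen_interior.mem_nhds hx)).hasDerivAt.fun_sub
      ((hasDerivAt_id x).const_mul m)
    simpa using hx'.hasDerivWithinAt

lemma half_mul_sq_le_relQuant (hD : Convex ℝ D) (hF : ContinuousOn F D)
    (hF' : DifferentiableOn ℝ F (interior D))
    (hF'' : DifferentiableOn ℝ (deriv F) (interior D))
    (hm : ∀ x ∈ interior D, m ≤ deriv (deriv F) x) {r rb : ℝ} (hr : r ∈ D)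
    (hrb : rb ∈ interior D) : m / 2 * (r - rb) ^ 2 ≤ relQuant F r rb := by
  have hd : DifferentiableAt ℝ F rb := hF'.differentiableAt (isOpen_interior.mem_nhds hrb)
  have := (convexOn_sub_half_mul_sq hD hF hF' hF'' hm).relQuant_nonneg hr
    (interior_subset hrb) (hd.sub ((differentiableAt_pow 2).const_mul _))
  rw [relQuant_sub_mul_sq hd] at this
  linarith

end SecondDerivative

lemma eventually_mul_le_of_tendsto_div {F g : ℝ → ℝ} {l : Filter ℝ} {L c : ℝ}
    (hF : Tendsto (fun r => F r / g r) l (𝓝 L)) (hg : ∀ᶠ r in l, 0 < g r) (hc : c < L) :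
    ∀ᶠ r in l, c * g r ≤ F r := by
  filter_upwards [hF.eventually (eventually_gt_nhds hc), hg] with r hr hgr
  exact (le_div_iff₀ hgr).1 hr.le

lemma eventually_add_mul_le_mul_rpow {γ : ℝ} (hγ : 1 < γ) (a b : ℝ) {ε : ℝ} (hε : 0 < ε) :
    ∀ᶠ r in atTop, a + b * r ≤ ε * r ^ γ := by
  filter_upwards [(tendsto_rpow_atTop (sub_pos.2 hγ)).eventually_ge_atTop ((|a| + |b|) / ε),
    eventually_ge_atTop 1] with r hr hr1
  have hsplit : r ^ γ = r ^ (γ - 1) * r := by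
    rw [← Real.rpow_add_one (by positivity), sub_add_cancel]
  calc a + b * r ≤ (|a| + |b|) * r := by
        nlinarith [le_abs_self a, le_abs_self b, abs_nonneg a]
    _ ≤ ε * r ^ (γ - 1) * r := by
        gcongr
        exact (div_le_iff₀' hε).1 hr
    _ = ε * r ^ γ := by rw [hsplit]; ring

lemma eventually_half_mul_rpow_le_relQuant {F : ℝ → ℝ} {K : Set ℝ} (hK : IsCompact K)
    (hF : ContinuousOn F K) (hF' : ContinuousOn (deriv F) K) {c γ : ℝ} (hc : 0 < c)
    (hγ : 1 < γ) (hgrowth : ∀ᶠ r in atTop, c * r ^ γ ≤ F r) :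
    ∀ᶠ r in atTop, ∀ rb ∈ K, c / 2 * r ^ γ ≤ relQuant F r rb := by
  obtain ⟨A, hA⟩ := hK.exists_bound_of_continuousOn (hF.sub (hF'.mul continuousOn_id))
  obtain ⟨B, hB⟩ := hK.exists_bound_of_continuousOn hF'
  filter_upwards [hgrowth, eventually_add_mul_le_mul_rpow hγ A B (half_pos hc),
    eventually_ge_atTop 0] with r hFr hAB hr rb hrb
  have hArb : F rb - deriv F rb * rb ≤ A := (abs_le.1 (hA rb hrb)).2
  have hBrb : deriv F rb * r ≤ B * r :=
    mul_le_mul_of_nonneg_right ((le_abs_self _).trans (hB rb hrb)) hr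
  rw [relQuant, mul_sub]
  linarith

lemma exists_mul_sq_le_relQuant {h : ℝ → ℝ} (hC2 : ContDiffOn ℝ 2 h (Ioi 0))
    (hC0 : ContinuousOn h (Ici 0)) (hconv : ∀ r > (0 : ℝ), 0 < deriv (deriv h) r)
    {δ M R : ℝ} (hδ : 0 < δ) (hδM : δ ≤ M) (hMR : M < R) :
    ∃ C > (0 : ℝ), ∀ r ∈ Icc 0 R, ∀ rb ∈ Icc δ M, C * |r - rb| ^ 2 ≤ relQuant h r rb := by
  have hR : 0 < R := by linarith
  have hd : DifferentiableOn ℝ h (Ioi 0) := hC2.differentiableOn (by norm_num)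
  have hd1 : ContDiffOn ℝ 1 (deriv h) (Ioi 0) := hC2.deriv_of_isOpen isOpen_Ioi (by norm_num)
  have hd2 : ContinuousOn (deriv (deriv h)) (Ioi 0) :=
    (hd1.deriv_of_isOpen isOpen_Ioi (m := 0) (by norm_num)).continuousOn
  have hδM_pos : Icc δ M ⊆ Ioi 0 := fun x hx => hδ.trans_le hx.1
  have hfar_pos : Icc (δ / 2) R ⊆ Ioi 0 := fun x hx => (half_pos hδ).trans_le hx.1
  obtain ⟨ε, hε, hεle⟩ := (strictConvexOn_of_deriv2_pos (convex_Ici 0) hC0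
      (by simpa using hconv)).exists_pos_le_relQuant hC0 (isCompact_Icc (a := 0) (b := δ / 2))
    isCompact_Icc (fun x hx => hx.1) (fun x hx => (hδ.trans_le hx.1).le)
    (disjoint_left.2 fun x hx hx' => by linarith [hx.2, hx'.1]) (hd1.continuousOn.mono hδM_pos)
    fun x hx => hd.differentiableAt (isOpen_Ioi.mem_nhds (hδM_pos hx))
  obtain ⟨m, hm, hmle⟩ := isCompact_Icc.exists_forall_le' (hd2.mono hfar_pos)
    fun x hx => hconv x (hfar_pos hx)
  refine ⟨min (m / 2) (ε / R ^ 2), by positivity, fun r hr rb hrb => ?_⟩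
  rcases le_total r (δ / 2) with hnear | hfar
  · have hdist : |r - rb| ≤ R := by
      rw [abs_le]
      constructor <;> linarith [hr.1, hrb.1, hrb.2]
    calc min (m / 2) (ε / R ^ 2) * |r - rb| ^ 2 ≤ ε / R ^ 2 * R ^ 2 := by
          gcongr
          exact min_le_right _ _
      _ = ε := by field_simp
      _ ≤ relQuant h r rb := hεle r ⟨hr.1, hnear⟩ rb hrb
  · have hint : rb ∈ interior (Icc (δ / 2) R) := by
      rw [interior_Icc]
      constructor <;> linarith [hrb.1, hrb.2]
    calc min (m / 2) (ε / R ^ 2) * |r - rb| ^ 2 ≤ m / 2 * (r - rb) ^ 2 := by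
          rw [sq_abs]
          gcongr
          exact min_le_left _ _
      _ ≤ relQuant h r rb := by
          refine half_mul_sq_le_relQuant (convex_Icc _ _) (hC0.mono fun x hx => ?_) ?_ ?_
            (fun x hx => hmle x (interior_subset hx)) ⟨hfar, hr.2⟩ hint
          · exact ((half_pos hδ).trans_le hx.1).le
          · exact hd.mono (interior_subset.trans hfar_pos)
          · exact (hd1.differentiableOn (by norm_num)).mono (interior_subset.trans hfar_pos)

/-- Lemma 2.4 of Lattanzio–Tzavaras: if `h` is `C²` and strictly convex on `(0,∞)`,
continuous on `[0,∞)`, with `h(r)/r^γ → k/(γ−1)` as `r → ∞` for some `k > 0`, `γ > 1`,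
and `r̄` ranges in `[δ, M]` with `0 < δ ≤ M`, then there are `R ≥ M + 1` and constants
`C₁, C₂ > 0` such that `h(r|r̄) ≥ C₁|r−r̄|²` on `[0,R] × [δ,M]` and
`h(r|r̄) ≥ C₂|r−r̄|^γ` on `(R,∞) × [δ,M]`. -/
theorem relative_energy_lower_bound (h : ℝ → ℝ) (k γ δ M : ℝ)
    (hk : 0 < k) (hγ : 1 < γ)
    (hC2 : ContDiffOn ℝ 2 h (Set.Ioi 0)) (hC0 : ContinuousOn h (Set.Ici 0))
    (hconv : ∀ r > (0 : ℝ), 0 < deriv (deriv h) r)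
    (hlim : Filter.Tendsto (fun r : ℝ => h r / r ^ γ) Filter.atTop (nhds (k / (γ - 1))))
    (hδ : 0 < δ) (hδM : δ ≤ M) :
    ∃ R : ℝ, M + 1 ≤ R ∧ ∃ C₁ > (0 : ℝ), ∃ C₂ > (0 : ℝ),
      (∀ r ∈ Set.Icc (0 : ℝ) R, ∀ rb ∈ Set.Icc δ M, C₁ * |r - rb| ^ 2 ≤ relQuant h r rb) ∧
      (∀ r ∈ Set.Ioi R, ∀ rb ∈ Set.Icc δ M, C₂ * |r - rb| ^ γ ≤ relQuant h r rb) := by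
  have hL : 0 < k / (γ - 1) := div_pos hk (sub_pos.2 hγ)
  set c := k / (γ - 1) / 2
  have hc : 0 < c := half_pos hL
  have hgrowth : ∀ᶠ r in atTop, c * r ^ γ ≤ h r := eventually_mul_le_of_tendsto_div hlim
    ((eventually_gt_atTop 0).mono fun r hr => Real.rpow_pos_of_pos hr γ) (half_lt_self hL)
  have hδM_pos : Icc δ M ⊆ Ioi 0 := fun x hx => hδ.trans_le hx.1
  obtain ⟨N, hN⟩ := eventually_atTop.1 <| eventually_half_mul_rpow_le_relQuant isCompact_Icc
    (hC0.mono fun x hx => (hδ.trans_le hx.1).le)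
    ((hC2.deriv_of_isOpen isOpen_Ioi (m := 1) (by norm_num)).continuousOn.mono hδM_pos) hc hγ
    hgrowth
  set R := max N (M + 1)
  obtain ⟨C₁, hC₁, hquad⟩ :=
    exists_mul_sq_le_relQuant hC2 hC0 hconv hδ hδM ((lt_add_one M).trans_le (le_max_right N _))
  refine ⟨R, le_max_right _ _, C₁, hC₁, c / 2, half_pos hc, hquad, fun r hr rb hrb => ?_⟩
  have hrb_le : rb ≤ r := by linarith [hrb.2, le_max_right N (M + 1), mem_Ioi.1 hr]
  calc c / 2 * |r - rb| ^ γ ≤ c / 2 * r ^ γ := by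
        rw [abs_of_nonneg (sub_nonneg.2 hrb_le)]
        gcongr
        linarith [hδ.trans_le hrb.1]
    _ ≤ relQuant h r rb := hN r ((le_max_left N _).trans (le_of_lt hr)) rb hrb
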